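/- arXiv:1611.03676 — 5 statements merged into one kernel-verified Lean document; each statement's English description precedes it below -/
import Mathlib

section
/- For all x > 0, the Gamma function satisfies Γ(x + 1/2) ≤ (x/e)^x · √(2π). -/
/-!
Let `h(x) = log Γ(x + 1/2) - (x log x - x)`. Since `Γ(x + 3/2) = (x + 1/2) Γ(x + 1/2)`, we get
`h(x + 1) - h(x) = log (x + 1/2) - ∫ₓ^{x+1} log t dt ≥ 0`, because `log` lies below its tangent at
the midpoint `x + 1/2`; hence `h(x) ≤ h(x + n)` for every `n`. At integers
`Γ(n + 1/2) = (2n)! √π / (4ⁿ n!)`, so Stirling's formula for `(2n)!` and `n!` gives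
`h(n) → log √(2π)`. Log-convexity of `Γ` bounds `h(m + t) ≤ h(m) + t / (2m)` for `t ∈ [0, 1]`,
which carries the limit from the integers to `x + n`.
-/

open Real Filter Topology Nat Stirling

theorem Nat.factorial_two_mul_eq_mul_doubleFactorial (n : ℕ) :
    (2 * n)! = 2 ^ n * n ! * (2 * n - 1)‼ := by
  cases n with
  | zero => rfl
  | succ m =>
    rw [show 2 * (m + 1) = (2 * m + 1) + 1 by ring, factorial_eq_mul_doubleFactorial,
      show 2 * m + 1 + 1 = 2 * (m + 1) by ring, doubleFactorial_two_mul]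
    rfl

namespace Real

theorem log_le_log_add_sub_div {c t : ℝ} (hc : 0 < c) (ht : 0 < t) :
    log t ≤ log c + (t - c) / c := by
  have h := log_le_sub_one_of_pos (div_pos ht hc)
  rw [log_div ht.ne' hc.ne'] at h
  rw [sub_div, div_self hc.ne']
  linarith

theorem integral_log_le_mul_log_midpoint {a b : ℝ} (ha : 0 < a) (hab : a ≤ b) :
    ∫ t in a..b, log t ≤ (b - a) * log ((a + b) / 2) := by
  have hc : 0 < (a + b) / 2 := by linarith
  set c := (a + b) / 2
  have hlin : Continuous fun t : ℝ => (t - c) / c := by fun_prop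
  calc ∫ t in a..b, log t ≤ ∫ t in a..b, (log c + (t - c) / c) :=
        intervalIntegral.integral_mono_on hab intervalIntegral.intervalIntegrable_log'
          ((continuous_const.add hlin).intervalIntegrable _ _)
          fun t ht => log_le_log_add_sub_div hc (ha.trans_le ht.1)
    _ = (b - a) * log c := by
        rw [intervalIntegral.integral_add intervalIntegrable_const (hlin.intervalIntegrable _ _),
          intervalIntegral.integral_div, intervalIntegral.integral_sub
            intervalIntegral.intervalIntegrable_id intervalIntegrable_const,
          integral_id, intervalIntegral.integral_const, intervalIntegral.integral_const]
        field_simp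
        ring

theorem add_one_mul_log_add_one_sub_mul_log_le {x : ℝ} (hx : 0 < x) :
    (x + 1) * log (x + 1) - x * log x ≤ 1 + log (x + 1 / 2) := by
  have h := integral_log_le_mul_log_midpoint hx (le_add_of_nonneg_right zero_le_one)
  rw [integral_log, show (x + (x + 1)) / 2 = x + 1 / 2 by ring, add_sub_cancel_left, one_mul] at h
  linarith

theorem sub_le_mul_log_div {a b : ℝ} (ha : 0 < a) (hb : 0 < b) : b - a ≤ b * log (b / a) := by
  have h := one_sub_inv_le_log_of_pos (div_pos hb ha)
  rw [inv_div] at h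
  calc b - a = b * (1 - a / b) := by field_simp
    _ ≤ b * log (b / a) := mul_le_mul_of_nonneg_left h hb.le

theorem log_Gamma_add_le {y t : ℝ} (hy : 0 < y) (ht₀ : 0 ≤ t) (ht₁ : t ≤ 1) :
    log (Gamma (y + t)) ≤ log (Gamma y) + t * log y := by
  have h := convexOn_log_Gamma.2 (Set.mem_Ioi.2 hy) (Set.mem_Ioi.2 (by linarith : 0 < y + 1))
    (by linarith : 0 ≤ 1 - t) ht₀ (by ring)
  simp only [smul_eq_mul, Function.comp_apply, Gamma_add_one hy.ne',
    log_mul hy.ne' (Gamma_pos_of_pos hy).ne'] at h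
  rw [show y + t = (1 - t) * y + t * (y + 1) by ring]
  linarith

theorem log_div_exp_one_rpow_self {x : ℝ} (hx : 0 < x) :
    log ((x / exp 1) ^ x) = x * log x - x := by
  rw [log_rpow (by positivity), log_div hx.ne' (exp_pos 1).ne', log_exp]
  ring

theorem Gamma_nat_add_half_div_pow {n : ℕ} (hn : n ≠ 0) :
    Gamma (n + 1 / 2) / (n / exp 1) ^ n = √(2 * π) * (stirlingSeq (2 * n) / stirlingSeq n) := by
  have hfac : ((2 * n)! : ℝ) = 2 ^ n * n ! * (2 * n - 1)‼ := by
    exact_mod_cast Nat.factorial_two_mul_eq_mul_doubleFactorial n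
  have h4n : √((2 : ℝ) * (2 * n : ℕ)) = √2 * √(2 * n) := by
    rw [← sqrt_mul (by norm_num)]; push_cast; ring_nf
  have h2π : √(2 * π) = √2 * √π := sqrt_mul (by norm_num) _
  have hpow : (2 * (n : ℝ) / exp 1) ^ (2 * n) = (2 ^ n * (n / exp 1) ^ n) ^ 2 := by
    rw [mul_div_assoc, mul_comm 2 n, pow_mul, mul_pow]
  rw [Real.Gamma_nat_add_half, stirlingSeq, stirlingSeq, hfac, h4n, h2π, Nat.cast_mul,
    Nat.cast_ofNat, hpow]
  field_simp

end Real

namespace GammaHalfShift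

noncomputable def defect (x : ℝ) : ℝ := log (Gamma (x + 1 / 2)) - (x * log x - x)

theorem defect_le_defect_add_one {x : ℝ} (hx : 0 < x) : defect x ≤ defect (x + 1) := by
  have hx' : 0 < x + 1 / 2 := by linarith
  have hstep := add_one_mul_log_add_one_sub_mul_log_le hx
  rw [defect, defect, add_right_comm, Gamma_add_one hx'.ne',
    log_mul hx'.ne' (Gamma_pos_of_pos hx').ne']
  linarith

theorem defect_le_defect_add_nat {x : ℝ} (hx : 0 < x) (n : ℕ) : defect x ≤ defect (x + n) := by
  induction n with
  | zero => simp
  | succ n ih =>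
    rw [Nat.cast_succ, ← add_assoc]
    exact ih.trans (defect_le_defect_add_one (by positivity))

theorem defect_add_le {m t : ℝ} (hm : 0 < m) (ht₀ : 0 ≤ t) (ht₁ : t ≤ 1) :
    defect (m + t) ≤ defect m + t / (2 * m) := by
  have hΓ := log_Gamma_add_le (by linarith : 0 < m + 1 / 2) ht₀ ht₁
  have hmt := sub_le_mul_log_div hm (by linarith : 0 < m + t)
  have hlog : log (m + 1 / 2) ≤ log m + 1 / (2 * m) := by
    have h := log_le_log_add_sub_div hm (by linarith : 0 < m + 1 / 2)
    rwa [show (m + 1 / 2 - m) / m = 1 / (2 * m) by field_simp; ring] at h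
  rw [log_div (by linarith) hm.ne'] at hmt
  rw [defect, defect, add_right_comm m t]
  linear_combination hΓ + hmt + mul_le_mul_of_nonneg_left hlog ht₀

theorem defect_natCast {n : ℕ} (hn : n ≠ 0) :
    defect n = log (√(2 * π) * (stirlingSeq (2 * n) / stirlingSeq n)) := by
  have hn' : (0 : ℝ) < n := by positivity
  rw [defect, ← log_div_exp_one_rpow_self hn', rpow_natCast,
    ← log_div (Gamma_pos_of_pos (by positivity)).ne' (by positivity), Gamma_nat_add_half_div_pow hn]

theorem tendsto_defect_natCast : Tendsto (fun n : ℕ => defect n) atTop (𝓝 (log √(2 * π))) := by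
  have h2 : Tendsto (fun n : ℕ => 2 * n) atTop atTop := tendsto_id.const_mul_atTop' two_pos
  have hS : Tendsto (fun n : ℕ => √(2 * π) * (stirlingSeq (2 * n) / stirlingSeq n)) atTop
      (𝓝 (√(2 * π))) := by
    have hπ : √π ≠ 0 := (sqrt_pos.2 pi_pos).ne'
    simpa [div_self hπ] using tendsto_const_nhds.mul
      ((tendsto_stirlingSeq_sqrt_pi.comp h2).div tendsto_stirlingSeq_sqrt_pi hπ)
  refine (hS.log (by positivity)).congr' ?_
  filter_upwards [eventually_ne_atTop 0] with n hn using (defect_natCast hn).symm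

theorem defect_le_log_sqrt_two_pi {x : ℝ} (hx : 0 < x) : defect x ≤ log √(2 * π) := by
  set k := ⌊x⌋₊
  set t := x - k with ht
  have ht₀ : 0 ≤ t := sub_nonneg.2 (Nat.floor_le hx.le)
  have ht₁ : t ≤ 1 := by linarith [Nat.lt_floor_add_one x]
  have hlim : Tendsto (fun n : ℕ => defect n + t / (2 * n)) atTop (𝓝 (log √(2 * π))) := by
    simpa [div_mul_eq_div_div] using
      tendsto_defect_natCast.add (tendsto_const_div_atTop_nhds_zero_nat (t / 2))
  refine ge_of_tendsto hlim ?_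
  filter_upwards [eventually_gt_atTop k] with n hn
  obtain ⟨j, rfl⟩ := Nat.exists_eq_add_of_le hn.le
  calc defect x ≤ defect (x + j) := defect_le_defect_add_nat hx j
    _ = defect ((k + j : ℕ) + t) := by rw [ht]; push_cast; ring_nf
    _ ≤ _ := defect_add_le (by exact_mod_cast hn.bot_lt) ht₀ ht₁

end GammaHalfShift

theorem gamma_half_shift_bound (x : ℝ) (hx : 0 < x) :
    Real.Gamma (x + 1/2) ≤ (x / Real.exp 1) ^ x * Real.sqrt (2 * Real.pi) := by
  have hΓ : 0 < Gamma (x + 1 / 2) := Gamma_pos_of_pos (by linarith)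
  have hpow : 0 < (x / exp 1) ^ x := by positivity
  have hdefect := GammaHalfShift.defect_le_log_sqrt_two_pi hx
  rw [GammaHalfShift.defect] at hdefect
  rw [← log_le_log_iff hΓ (by positivity), log_mul hpow.ne' (by positivity),
    log_div_exp_one_rpow_self hx]
  linarith
end

section
/- Let k_t(z) = (4πt)^{−d/2}·exp(−|z|²/(4t)) be the heat kernel on ℝ^d. For all x, y, w ∈ ℝ^d and α, β, t > 0, e^{−α|x−w|} · k_t(x−y) · e^{α|y−w|} ≤ ((1+β)/β)^{d/2} · e^{(1+β)α²t} · k_s(x−y), where s = ((1+β)/β)·t. -/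
theorem weighted_heat_kernel_bound (d : ℕ) (x y w : EuclideanSpace ℝ (Fin d))
    (α β t : ℝ) (hα : 0 < α) (hβ : 0 < β) (ht : 0 < t) :
    Real.exp (-α * ‖x - w‖)
        * ((4 * Real.pi * t) ^ (-(d : ℝ) / 2) * Real.exp (-‖x - y‖ ^ 2 / (4 * t)))
        * Real.exp (α * ‖y - w‖)
      ≤ ((1 + β) / β) ^ ((d : ℝ) / 2) * Real.exp ((1 + β) * α ^ 2 * t)
          * ((4 * Real.pi * ((1 + β) / β * t)) ^ (-(d : ℝ) / 2)
              * Real.exp (-‖x - y‖ ^ 2 / (4 * ((1 + β) / β * t)))) := by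
  set r := ‖x - y‖ with hr
  have hrpos : 0 ≤ r := norm_nonneg _
  have hc : (0:ℝ) < (1 + β) / β := by positivity
  have hpi : (0:ℝ) < Real.pi := Real.pi_pos
  have hA : (0:ℝ) < 4 * Real.pi * t := by positivity
  -- prefactor identity
  have hpref : ((1 + β) / β) ^ ((d : ℝ) / 2) * (4 * Real.pi * ((1 + β) / β * t)) ^ (-(d : ℝ) / 2)
      = (4 * Real.pi * t) ^ (-(d : ℝ) / 2) := by
    have h1 : 4 * Real.pi * ((1 + β) / β * t) = ((1 + β) / β) * (4 * Real.pi * t) := by ring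
    rw [h1, Real.mul_rpow hc.le hA.le, ← mul_assoc,
      ← Real.rpow_add hc, show (d:ℝ)/2 + -(d:ℝ)/2 = 0 by ring, Real.rpow_zero, one_mul]
  -- triangle inequality
  have htri : ‖y - w‖ ≤ r + ‖x - w‖ := by
    calc ‖y - w‖ = ‖(y - x) + (x - w)‖ := by abel_nf
    _ ≤ ‖y - x‖ + ‖x - w‖ := norm_add_le _ _
    _ = r + ‖x - w‖ := by rw [norm_sub_rev]
  -- exponent inequality
  have hexp : -α * ‖x - w‖ + -r ^ 2 / (4 * t) + α * ‖y - w‖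
      ≤ (1 + β) * α ^ 2 * t + -r ^ 2 / (4 * ((1 + β) / β * t)) := by
    have hkey : α * r + -r ^ 2 / (4 * t) ≤ (1 + β) * α ^ 2 * t + -r ^ 2 / (4 * ((1 + β) / β * t)) := by
      rw [← sub_nonneg]
      have heq : (1 + β) * α ^ 2 * t + -r ^ 2 / (4 * ((1 + β) / β * t))
          - (α * r + -r ^ 2 / (4 * t)) = (r - 2 * t * (1 + β) * α) ^ 2 / (4 * t * (1 + β)) := by
        field_simp
        ring
      rw [heq]
      positivity
    nlinarith [mul_le_mul_of_nonneg_left htri hα.le]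
  calc Real.exp (-α * ‖x - w‖) * ((4 * Real.pi * t) ^ (-(d : ℝ) / 2) * Real.exp (-r ^ 2 / (4 * t)))
        * Real.exp (α * ‖y - w‖)
      = (4 * Real.pi * t) ^ (-(d : ℝ) / 2)
          * Real.exp (-α * ‖x - w‖ + -r ^ 2 / (4 * t) + α * ‖y - w‖) := by
        rw [Real.exp_add, Real.exp_add]; ring
    _ ≤ (4 * Real.pi * t) ^ (-(d : ℝ) / 2)
          * Real.exp ((1 + β) * α ^ 2 * t + -r ^ 2 / (4 * ((1 + β) / β * t))) := by
        gcongr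
    _ = ((1 + β) / β) ^ ((d : ℝ) / 2) * Real.exp ((1 + β) * α ^ 2 * t)
          * ((4 * Real.pi * ((1 + β) / β * t)) ^ (-(d : ℝ) / 2)
              * Real.exp (-r ^ 2 / (4 * ((1 + β) / β * t)))) := by
        rw [← hpref, Real.exp_add]; ring
end

section
/- Let α = 0.14 and τ = 4e^{−4α} − 1. Then τ > 0, and for all x > α, with ε = α/x one has ((1 + 1/√ε)/2)² · e^{4εx} ≤ 1 + x/(τα), and moreover 1/(τα) < 5.56. -/
/-!
Since `4 ε x = 4α`, the factor `e^{4εx}` is the constant `e^{4α} = 4 / (1 + τ)`, and with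
`t = 1/√ε` (so `t² = x/α`) the estimate reads `(1 + t)² / (1 + τ) ≤ 1² / 1 + t² / τ`: the
two-term case of Sedrakyan's form of Cauchy–Schwarz. The numerical claims reduce to a Taylor upper bound
for `e^{0.56}`.
-/

theorem add_sq_div_add_le_sq_div_add_sq_div {a b u v : ℝ} (hu : 0 < u) (hv : 0 < v) :
    (a + b) ^ 2 / (u + v) ≤ a ^ 2 / u + b ^ 2 / v := by
  simpa [Fin.sum_univ_two] using Finset.sq_sum_div_le_sum_sq_div Finset.univ ![a, b]
    (g := ![u, v]) (by simp [Fin.forall_fin_two, hu, hv])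

/-- `3892 / 2223` is exactly the value of `e^{0.56}` at which `1 / (τ α) = 5.56`. -/
theorem Real.exp_fourteen_div_twentyfive_lt : Real.exp (14 / 25) < 3892 / 2223 := by
  refine (Real.exp_bound' (x := 14 / 25) (n := 7) (by norm_num) (by norm_num)
    (by norm_num)).trans_lt ?_
  norm_num [Finset.sum_range_succ, Nat.factorial]

theorem sq_half_one_add_inv_sqrt_mul_le {α x τ : ℝ} (hα : 0 < α) (hx : 0 < x) (hτ : 0 < τ) :
    ((1 + 1 / Real.sqrt (α / x)) / 2) ^ 2 * (4 / (1 + τ)) ≤ 1 + x / (τ * α) := by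
  have hsq : (1 / Real.sqrt (α / x)) ^ 2 = x / α := by
    rw [div_pow, Real.sq_sqrt (by positivity)]; field_simp
  calc ((1 + 1 / Real.sqrt (α / x)) / 2) ^ 2 * (4 / (1 + τ))
      = (1 + 1 / Real.sqrt (α / x)) ^ 2 / (1 + τ) := by ring
    _ ≤ 1 ^ 2 / 1 + (1 / Real.sqrt (α / x)) ^ 2 / τ :=
        add_sq_div_add_le_sq_div_add_sq_div one_pos hτ
    _ = 1 + x / (τ * α) := by rw [hsq]; field_simp

theorem case_two_estimate :
    0 < 4 * Real.exp (-(4 * 0.14)) - 1 ∧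
    (∀ x : ℝ, 0.14 < x →
      ((1 + 1 / Real.sqrt (0.14 / x)) / 2) ^ 2 * Real.exp (4 * (0.14 / x) * x)
        ≤ 1 + x / ((4 * Real.exp (-(4 * 0.14)) - 1) * 0.14)) ∧
    1 / ((4 * Real.exp (-(4 * 0.14)) - 1) * 0.14) < 5.56 := by
  have hexp : Real.exp (-(4 * 0.14)) = (Real.exp (14 / 25))⁻¹ := by
    rw [← Real.exp_neg]; norm_num
  set τ := 4 * Real.exp (-(4 * 0.14)) - 1 with hτ_def
  have he : Real.exp (14 / 25) = 4 / (1 + τ) := by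
    rw [hτ_def, hexp]; field_simp; ring
  have hτ_gt : 1250 / 973 < τ := by
    have := inv_strictAnti₀ (Real.exp_pos _) Real.exp_fourteen_div_twentyfive_lt
    rw [hτ_def, hexp]; norm_num at this ⊢; linarith
  have hτ : 0 < τ := by linarith
  refine ⟨hτ, fun x hx => ?_, ?_⟩
  · rw [show 4 * (0.14 / x) * x = (14 / 25 : ℝ) by field_simp; norm_num, he]
    exact sq_half_one_add_inv_sqrt_mul_le (by norm_num) (by linarith) hτ
  · rw [div_lt_iff₀ (by positivity)]
    linarith
end

section
/- For every x ≥ 0 with x ≤ 0.14, ((1 + 1)/2)² · e^{4x} = e^{4x} ≤ 1 + 5.56·x; and for every x > 0.14 there exists ε ∈ (0,1] such that ((1 + 1/√ε)/2)² · e^{4εx} ≤ 1 + 5.56·x. Hence for every x ≥ 0 there exists ε ∈ (0,1] with ((1 + 1/√ε)/2)² · e^{4εx} ≤ 1 + 5.56·x. -/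
private lemma expE : Real.exp 0.56 < 1.7507 := by
  have h25 : (Real.exp 0.56) ^ 25 = Real.exp 1 ^ 14 := by
    rw [← Real.exp_nat_mul, ← Real.exp_nat_mul]; norm_num
  have h1 : Real.exp 1 ^ 14 < (2.7182818286 : ℝ) ^ 14 :=
    pow_lt_pow_left₀ Real.exp_one_lt_d9 (le_of_lt (Real.exp_pos 1)) (by norm_num)
  have h2 : ((2.7182818286 : ℝ)) ^ 14 < (1.7507 : ℝ) ^ 25 := by norm_num
  have : (Real.exp 0.56) ^ 25 < (1.7507 : ℝ) ^ 25 := by rw [h25]; linarith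
  exact lt_of_pow_lt_pow_left₀ 25 (by norm_num) this

private lemma part1 : ∀ x : ℝ, 0 ≤ x → x ≤ 0.14 →
      ((1 + 1) / 2 : ℝ) ^ 2 * Real.exp (4 * x) = Real.exp (4 * x) ∧
      Real.exp (4 * x) ≤ 1 + 5.56 * x := by
  intro x hx0 hx14
  refine ⟨by norm_num, ?_⟩
  set s : ℝ := x / 0.14 with hs
  have hs0 : 0 ≤ s := by positivity
  have hs1 : s ≤ 1 := by rw [hs]; rw [div_le_one (by norm_num)]; linarith
  have hxs : (4 : ℝ) * x = (1 - s) • (0 : ℝ) + s • (0.56 : ℝ) := by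
    simp only [smul_eq_mul, mul_zero, zero_add, hs]; ring
  have hconv := convexOn_exp.2 (Set.mem_univ (0 : ℝ)) (Set.mem_univ (0.56 : ℝ))
    (by linarith : (0:ℝ) ≤ 1 - s) hs0 (by ring)
  rw [← hxs] at hconv
  simp only [smul_eq_mul, Real.exp_zero, mul_one] at hconv
  have hE := expE
  have hsx : 0.14 * s = x := by rw [hs]; field_simp
  have hmul : s * Real.exp 0.56 ≤ s * 1.7507 := mul_le_mul_of_nonneg_left hE.le hs0
  linarith

private lemma part2 : ∀ x : ℝ, 0.14 < x → ∃ ε ∈ Set.Ioc (0 : ℝ) 1,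
      ((1 + 1 / Real.sqrt ε) / 2) ^ 2 * Real.exp (4 * ε * x) ≤ 1 + 5.56 * x := by
  intro x hx
  have hx0 : (0:ℝ) < x := by linarith
  refine ⟨0.14 / x, ⟨by positivity, by rw [div_le_one hx0]; linarith⟩, ?_⟩
  have hεx : 4 * (0.14 / x) * x = 0.56 := by field_simp; ring
  rw [hεx]
  have hsq : Real.sqrt (0.14 / x) = Real.sqrt 0.14 / Real.sqrt x :=
    Real.sqrt_div (by norm_num) x
  set t : ℝ := Real.sqrt x / Real.sqrt 0.14 with ht
  have h14 : (0:ℝ) < Real.sqrt 0.14 := Real.sqrt_pos.2 (by norm_num)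
  have hxs : (0:ℝ) < Real.sqrt x := Real.sqrt_pos.2 hx0
  have hinv : 1 / Real.sqrt (0.14 / x) = t := by
    rw [hsq, ht, one_div, inv_div]
  rw [hinv]
  have ht2 : t ^ 2 = x / 0.14 := by
    rw [ht, div_pow, Real.sq_sqrt hx0.le, Real.sq_sqrt (by norm_num : (0:ℝ) ≤ 0.14)]
  have hxt : x = 0.14 * t ^ 2 := by
    rw [ht2]; field_simp
  have ht0 : 0 ≤ t := by positivity
  have hE := expE
  nlinarith [sq_nonneg (t - 1.2845), sq_nonneg (1 + t), hE, ht0,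
    mul_le_mul_of_nonneg_left hE.le (sq_nonneg ((1 + t) / 2))]

theorem eps_choice :
    (∀ x : ℝ, 0 ≤ x → x ≤ 0.14 →
      ((1 + 1) / 2 : ℝ) ^ 2 * Real.exp (4 * x) = Real.exp (4 * x) ∧
      Real.exp (4 * x) ≤ 1 + 5.56 * x) ∧
    (∀ x : ℝ, 0.14 < x → ∃ ε ∈ Set.Ioc (0 : ℝ) 1,
      ((1 + 1 / Real.sqrt ε) / 2) ^ 2 * Real.exp (4 * ε * x) ≤ 1 + 5.56 * x) ∧
    (∀ x : ℝ, 0 ≤ x → ∃ ε ∈ Set.Ioc (0 : ℝ) 1,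
      ((1 + 1 / Real.sqrt ε) / 2) ^ 2 * Real.exp (4 * ε * x) ≤ 1 + 5.56 * x) := by
  refine ⟨part1, part2, ?_⟩
  intro x hx0
  rcases le_or_gt x 0.14 with h | h
  · refine ⟨1, ⟨one_pos, le_refl 1⟩, ?_⟩
    have := (part1 x hx0 h).2
    simp only [Real.sqrt_one, one_mul, mul_one]
    norm_num
    linarith
  · exact part2 x h
end

section
/- For all x ∈ [0,1], (5/2)·x² + ln(1+x) ≤ ((x + x²)/(1+2x)²)·(1 + 5x + 8.5·x²). -/
/-!
`x (x + 6) / (4 x + 6)` is the [2/1] Padé approximant of `log (1 + x)` at `0`; the difference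
of the two has derivative `4 x³ / ((4 x + 6)² (1 + x))`, so the approximant dominates the logarithm
for `x ≥ 0`. After this replacement the gap between the two sides of the inequality is the rational
function `x³ (1 + x) (7 - 6 x) / ((1 + 2 x)² (4 x + 6))`, nonnegative for `0 ≤ x ≤ 7 / 6`.
-/

open Real Set

lemma hasDerivAt_pade_sub_log {y : ℝ} (hy : -1 < y) :
    HasDerivAt (fun t => t * (t + 6) / (4 * t + 6) - log (1 + t))
      (4 * y ^ 3 / ((4 * y + 6) ^ 2 * (1 + y))) y := by
  have hden : 4 * y + 6 ≠ 0 := by linarith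
  have hlog : 1 + y ≠ 0 := by linarith
  have hpade : HasDerivAt (fun t => t * (t + 6) / (4 * t + 6))
      (((1 * (y + 6) + y * 1) * (4 * y + 6) - y * (y + 6) * (4 * 1)) / (4 * y + 6) ^ 2) y :=
    ((hasDerivAt_id' y).mul ((hasDerivAt_id' y).add_const 6)).div
      (((hasDerivAt_id' y).const_mul 4).add_const 6) hden
  refine (hpade.sub (((hasDerivAt_id' y).const_add 1).log hlog)).congr_deriv ?_
  rw [div_sub_div _ _ (pow_ne_zero 2 hden) hlog]
  ring

lemma log_one_add_le_pade {x : ℝ} (hx : 0 ≤ x) :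
    log (1 + x) ≤ x * (x + 6) / (4 * x + 6) := by
  have hmono : MonotoneOn (fun t => t * (t + 6) / (4 * t + 6) - log (1 + t)) (Ici 0) := by
    refine monotoneOn_of_hasDerivWithinAt_nonneg (convex_Ici 0)
      (fun y hy => (hasDerivAt_pade_sub_log ?_).continuousAt.continuousWithinAt)
      (fun y hy => (hasDerivAt_pade_sub_log ?_).hasDerivWithinAt) (fun y hy => ?_) <;>
    simp only [interior_Ici, mem_Ioi, mem_Ici] at hy
    · linarith
    · linarith
    · positivity
  simpa using hmono self_mem_Ici hx hx

lemma add_pade_le {x : ℝ} (hx₀ : 0 ≤ x) (hx₁ : x ≤ 7 / 6) :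
    5 / 2 * x ^ 2 + x * (x + 6) / (4 * x + 6)
      ≤ (x + x ^ 2) / (1 + 2 * x) ^ 2 * (1 + 5 * x + 8.5 * x ^ 2) := by
  have hgap : (x + x ^ 2) / (1 + 2 * x) ^ 2 * (1 + 5 * x + 8.5 * x ^ 2)
      - (5 / 2 * x ^ 2 + x * (x + 6) / (4 * x + 6))
      = x ^ 3 * (1 + x) * (7 - 6 * x) / ((1 + 2 * x) ^ 2 * (4 * x + 6)) := by
    have : 4 * x + 6 ≠ 0 := by linarith
    have : 1 + 2 * x ≠ 0 := by linarith
    field_simp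
    ring
  rw [← sub_nonneg, hgap]
  have : 0 ≤ 7 - 6 * x := by linarith
  positivity

theorem key_log_inequality (x : ℝ) (hx : x ∈ Set.Icc (0 : ℝ) 1) :
    5 / 2 * x ^ 2 + Real.log (1 + x)
      ≤ (x + x ^ 2) / (1 + 2 * x) ^ 2 * (1 + 5 * x + 8.5 * x ^ 2) := by
  obtain ⟨hx₀, hx₁⟩ := hx
  linarith [log_one_add_le_pade hx₀, add_pade_le hx₀ (by linarith)]
end
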